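/- arXiv:2310.15242 — 2 statements merged into one kernel-verified Lean document; each statement's English description precedes it below -/
import Mathlib

section
/- Let X and Γ be connected, bounded-valence graphs, suppose X is quasi-transitive, and suppose X and Γ are quasi-isometric. Then for every n > 0 there exists m > 0 such that every tight element b ∈ 𝓑Γ with |δb| < n satisfies: the set of endpoints of the edges of δb has diameter less than m in Γ. -/
open SimpleGraph

namespace Paper

variable {V W : Type*}

/-- Locally finite graph: every vertex has finite degree. -/
def LocFin (G : SimpleGraph V) : Prop := ∀ v : V, (G.neighborSet v).Finite

/-- All vertex degrees are at most `d`. -/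
def DegLe (G : SimpleGraph V) (d : ℕ) : Prop :=
  ∀ v : V, (G.neighborSet v).Finite ∧ (G.neighborSet v).ncard ≤ d

/-- Bounded valence. -/
def BddVal (G : SimpleGraph V) : Prop := ∃ d : ℕ, DegLe G d

/-- `(l, e)`-quasi-isometric embedding between the vertex sets of two graphs. -/
def IsQIE (G : SimpleGraph V) (H : SimpleGraph W) (l e : ℝ) (f : V → W) : Prop :=
  ∀ x y : V,
    (G.dist x y : ℝ) / l - e ≤ (H.dist (f x) (f y) : ℝ) ∧
      (H.dist (f x) (f y) : ℝ) ≤ l * (G.dist x y : ℝ) + e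

/-- Coarse surjectivity: every vertex of the target lies within distance `e` of the image. -/
def CoarseSurj (H : SimpleGraph W) (e : ℝ) (f : V → W) : Prop :=
  ∀ w : W, ∃ x : V, (H.dist w (f x) : ℝ) ≤ e

/-- `(l, e)`-quasi-isometry. -/
def IsQI (G : SimpleGraph V) (H : SimpleGraph W) (l e : ℝ) (f : V → W) : Prop :=
  IsQIE G H l e f ∧ CoarseSurj H e f

/-- `g` is an `h`-quasi-inverse of `f`. -/
def IsQInv (G : SimpleGraph V) (h : ℝ) (f : V → W) (g : W → V) : Prop :=
  ∀ x : V, (G.dist (g (f x)) x : ℝ) ≤ h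

/-- Reachability by a walk all of whose vertices avoid the set `S`. -/
def ReachOut (G : SimpleGraph V) (S : Set V) (a b : V) : Prop :=
  ∃ w : G.Walk a b, ∀ v ∈ w.support, v ∉ S

/-- A one-way infinite simple ray. -/
def RayIn (G : SimpleGraph V) (r : ℕ → V) : Prop :=
  Function.Injective r ∧ ∀ n : ℕ, G.Adj (r n) (r (n + 1))

/-- End-equivalence of rays: for every finite vertex set they have tails in the same
connected component of the graph with that set deleted. -/
def EndEquiv (G : SimpleGraph V) (r₁ r₂ : ℕ → V) : Prop :=
  ∀ S : Set V, S.Finite → ∃ N : ℕ, ∀ m n : ℕ, N ≤ m → N ≤ n → ReachOut G S (r₁ m) (r₂ n)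

/-- Two points (encoded as sequences: a constant sequence for a vertex, a ray for an end)
lie in distinct connected components of `G` with the vertex set `S` deleted. -/
def SepComps (G : SimpleGraph V) (S : Set V) (a b : ℕ → V) : Prop :=
  ∃ N : ℕ,
    (∀ m n : ℕ, N ≤ m → N ≤ n → ReachOut G S (a m) (a n)) ∧
    (∀ m n : ℕ, N ≤ m → N ≤ n → ReachOut G S (b m) (b n)) ∧
    (∀ m n : ℕ, N ≤ m → N ≤ n → ¬ ReachOut G S (a m) (b n))

/-- `vs(G) ≥ N`: any vertex set separating two ends has at least `N` elements. -/
def VsGe (G : SimpleGraph V) (N : ℕ) : Prop :=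
  ∀ r₁ r₂ : ℕ → V, RayIn G r₁ → RayIn G r₂ →
    ∀ S : Set V, S.Finite → SepComps G S r₁ r₂ → N ≤ S.ncard

/-- `vs(G) ≥ c` for a real threshold `c`. -/
def VsGeR (G : SimpleGraph V) (c : ℝ) : Prop :=
  ∀ r₁ r₂ : ℕ → V, RayIn G r₁ → RayIn G r₂ →
    ∀ S : Set V, S.Finite → SepComps G S r₁ r₂ → c ≤ (S.ncard : ℝ)

/-- `U` is a connected component of `G` with the vertex set `A` deleted. -/
def IsCompOut (G : SimpleGraph V) (A U : Set V) : Prop :=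
  ∃ a ∈ U, ∀ b : V, ReachOut G A a b ↔ b ∈ U

/-- The edge coboundary `δb` of a vertex set `b`. -/
def cob (G : SimpleGraph V) (b : Set V) : Set (Sym2 V) :=
  {e | ∃ x y : V, e = s(x, y) ∧ G.Adj x y ∧ x ∈ b ∧ y ∉ b}

/-- Membership in the Boolean ring `𝓑G` of vertex sets with finite coboundary. -/
def MemBX (G : SimpleGraph V) (b : Set V) : Prop := (cob G b).Finite

/-- The set of endpoints of the edges of `δb`. -/
def cobVerts (G : SimpleGraph V) (b : Set V) : Set V :=
  {v | ∃ w : V, s(v, w) ∈ cob G b}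

/-- A tight element: both sides induce connected subgraphs. -/
def Tight (G : SimpleGraph V) (b : Set V) : Prop :=
  (G.induce b).Connected ∧ (G.induce bᶜ).Connected

/-- Vertices of `A` that are endpoints of an edge with the other endpoint in `U`. -/
def AttachSet (G : SimpleGraph V) (A U : Set V) : Set V :=
  {v | v ∈ A ∧ ∃ u ∈ U, G.Adj v u}

/-- `incut(A) ≤ k` for a vertex set `A`, with the intrinsic metric of `G.induce A`. -/
def IncutBddSet (G : SimpleGraph V) (A : Set V) (k : ℕ) : Prop :=
  ∀ U : Set V, IsCompOut G A U →
    ∀ v w : A, (v : V) ∈ AttachSet G A U → (w : V) ∈ AttachSet G A U →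
      (G.induce A).dist v w ≤ k

/-- `outcut(A) ≤ k` for a vertex set `A`. -/
def OutcutBddSet (G : SimpleGraph V) (A : Set V) (k : ℕ) : Prop :=
  ∀ U : Set V, IsCompOut G A U → IncutBddSet G U k

/-- Uniform coboundary for a vertex set. -/
def UnifCobSet (G : SimpleGraph V) (A : Set V) : Prop :=
  (∃ k : ℕ, IncutBddSet G A k) ∧ (∃ k : ℕ, OutcutBddSet G A k)

/-- `incut(L) ≤ k` for a subgraph `L`, with its own intrinsic metric. -/
def IncutBddSub (G : SimpleGraph V) (L : G.Subgraph) (k : ℕ) : Prop :=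
  ∀ U : Set V, IsCompOut G L.verts U →
    ∀ v w : L.verts, (v : V) ∈ AttachSet G L.verts U → (w : V) ∈ AttachSet G L.verts U →
      L.coe.dist v w ≤ k

/-- `outcut(L) ≤ k` for a subgraph `L`. -/
def OutcutBddSub (G : SimpleGraph V) (L : G.Subgraph) (k : ℕ) : Prop :=
  ∀ U : Set V, IsCompOut G L.verts U → IncutBddSet G U k

/-- Uniform coboundary for a subgraph. -/
def UnifCobSub (G : SimpleGraph V) (L : G.Subgraph) : Prop :=
  (∃ k : ℕ, IncutBddSub G L k) ∧ (∃ k : ℕ, OutcutBddSub G L k)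

/-- Quasi-transitive graph: the automorphism group has finitely many orbits of vertices. -/
def QuasiTransitive (G : SimpleGraph V) : Prop :=
  ∃ F : Set V, F.Finite ∧ ∀ v : V, ∃ e : G ≃g G, ∃ w ∈ F, e w = v

/-- Hausdorff distance between two vertex sets is at most `r`. -/
def HausBdd (G : SimpleGraph V) (A B : Set V) (r : ℝ) : Prop :=
  (∀ a ∈ A, ∃ b ∈ B, (G.dist a b : ℝ) ≤ r) ∧ (∀ b ∈ B, ∃ a ∈ A, (G.dist a b : ℝ) ≤ r)

/-- Reachability by a walk avoiding the edge set `F`. -/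
def ReachAvoidE (G : SimpleGraph V) (F : Set (Sym2 V)) (a b : V) : Prop :=
  ∃ w : G.Walk a b, ∀ e ∈ w.edges, e ∉ F

/-- The ends of the rays `r₁`, `r₂` are separated by deleting the edge set `F`. -/
def SepEnds (G : SimpleGraph V) (F : Set (Sym2 V)) (r₁ r₂ : ℕ → V) : Prop :=
  ∃ N : ℕ, ∀ m n : ℕ, N ≤ m → N ≤ n → ¬ ReachAvoidE G F (r₁ m) (r₂ n)

/-- Accessibility: some `k ≥ 1` such that any two distinct ends can be separated by
deleting at most `k` edges. -/
def Accessible (G : SimpleGraph V) : Prop :=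
  ∃ k : ℕ, 1 ≤ k ∧ ∀ r₁ r₂ : ℕ → V, RayIn G r₁ → RayIn G r₂ → ¬ EndEquiv G r₁ r₂ →
    ∃ F : Set (Sym2 V), F.Finite ∧ F.ncard ≤ k ∧ SepEnds G F r₁ r₂

/-- `l`-quasi-action of a group on the vertex set of a graph. -/
def IsQAct {G₀ : Type*} [Group G₀] (G : SimpleGraph V) (l : ℝ) (φ : G₀ → V → V) : Prop :=
  (∀ g : G₀, IsQI G G l l (φ g)) ∧
  (∀ (g h : G₀) (x : V), (G.dist (φ (g * h) x) (φ g (φ h x)) : ℝ) ≤ l) ∧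
  (∀ g : G₀, IsQInv G l (φ g) (φ g⁻¹) ∧ IsQInv G l (φ g⁻¹) (φ g))

/-- `B`-cobounded quasi-action. -/
def Cobdd {G₀ : Type*} [Group G₀] (G : SimpleGraph V) (B : ℝ) (φ : G₀ → V → V) : Prop :=
  ∀ x y : V, ∃ g : G₀, (G.dist x (φ g y) : ℝ) ≤ B

/-- The diameter (in `ℕ`) of a vertex set. -/
noncomputable def setDiam (G : SimpleGraph V) (S : Set V) : ℕ :=
  sSup {d : ℕ | ∃ x ∈ S, ∃ y ∈ S, G.dist x y = d}

/-- 2-connected: connected, at least three vertices, and deleting any single vertex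
leaves it connected. -/
def TwoConnected (G : SimpleGraph V) : Prop :=
  G.Connected ∧ (∃ a b c : V, a ≠ b ∧ a ≠ c ∧ b ≠ c) ∧
    ∀ v : V, (G.induce {w : V | w ≠ v}).Connected

/-- Tree decomposition. -/
def IsTreeDecomp {VT : Type*} (X : SimpleGraph V) (T : SimpleGraph VT) (B : VT → Set V) :
    Prop :=
  T.IsTree ∧ (∀ x : V, ∃ u : VT, x ∈ B u) ∧
    ∀ u v w : VT, (∃ p : T.Walk u w, p.IsPath ∧ v ∈ p.support) → B u ∩ B w ⊆ B v

/-- Bounded adhesion. -/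
def BddAdhesion {VT : Type*} (T : SimpleGraph VT) (B : VT → Set V) : Prop :=
  ∃ N : ℕ, ∀ u w : VT, T.Adj u w → (B u ∩ B w).Finite ∧ (B u ∩ B w).ncard ≤ N

/-- Connected parts. -/
def ConnParts {VT : Type*} (X : SimpleGraph V) (B : VT → Set V) : Prop :=
  ∀ u : VT, (X.induce (B u)).Connected

/-- Replacing each bag by its closed `r`-neighbourhood. -/
def ballBag {VT : Type*} (X : SimpleGraph V) (B : VT → Set V) (r : ℕ) : VT → Set V :=
  fun u => {x : V | ∃ y ∈ B u, X.dist x y ≤ r}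

/-- A point of `G` which is either a vertex lying outside `B(S;R)` (encoded as a constant
sequence) or an end (encoded as a ray representing it). -/
def PtSeq (G : SimpleGraph V) (S : Set V) (R : ℝ) (a : ℕ → V) : Prop :=
  (∃ v : V, a = Function.const ℕ v ∧ ∀ s ∈ S, R < (G.dist v s : ℝ)) ∨ RayIn G a

/-- A subring of `𝓑G`: contains `∅`, and is closed under intersection and
symmetric difference. -/
def IsSubring (G : SimpleGraph V) (R : Set (Set V)) : Prop :=
  (∀ b ∈ R, MemBX G b) ∧ ∅ ∈ R ∧
    (∀ a ∈ R, ∀ b ∈ R, a ∩ b ∈ R) ∧ (∀ a ∈ R, ∀ b ∈ R, symmDiff a b ∈ R)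

/-- The subring generated by a family. -/
def genSubring (G : SimpleGraph V) (E : Set (Set V)) : Set (Set V) :=
  ⋂₀ {R : Set (Set V) | IsSubring G R ∧ E ⊆ R}

/-- Two vertex sets are nested. -/
def Nested (a b : Set V) : Prop :=
  a ∩ b = ∅ ∨ a ∩ bᶜ = ∅ ∨ aᶜ ∩ b = ∅ ∨ aᶜ ∩ bᶜ = ∅

/-- A nested family: closed under complementation and pairwise nested. -/
def NestedFam (E : Set (Set V)) : Prop :=
  (∀ b ∈ E, bᶜ ∈ E) ∧ ∀ a ∈ E, ∀ b ∈ E, Nested a b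

/-- A `G₀`-invariant family of vertex sets. -/
def GInvFam (G₀ : Type*) [Group G₀] [MulAction G₀ V] (E : Set (Set V)) : Prop :=
  ∀ g : G₀, ∀ b ∈ E, (fun x => g • x) '' b ∈ E

/-- A `G₀`-finite family of vertex sets: it meets only finitely many orbits. -/
def GFinFam (G₀ : Type*) [Group G₀] [MulAction G₀ V] (E : Set (Set V)) : Prop :=
  ∃ F : Set (Set V), F.Finite ∧ F ⊆ E ∧
    ∀ b ∈ E, ∃ g : G₀, ∃ c ∈ F, (fun x => g • x) '' c = b

/-- `g` stabilises the subgraph `L` setwise. -/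
def StabSub {G₀ : Type*} [Group G₀] [MulAction G₀ V] (G : SimpleGraph V) (g : G₀)
    (L : G.Subgraph) : Prop :=
  (∀ v : V, v ∈ L.verts ↔ g • v ∈ L.verts) ∧
    (∀ a b : V, L.Adj a b ↔ L.Adj (g • a) (g • b))

end Paper

/-!
For a connected, locally finite, quasi-transitive graph `X` the bound is a compactness
statement. A tight cut is determined by its coboundary together with one vertex on each side,
and an ultrafilter limit of tight cuts with fewer than `n` edges has fewer than `n` edges; so
only finitely many such cuts separate two given vertices, and automorphisms move one endpoint
of the coboundary into a finite set.

The bound then passes to `Γ` along a quasi-isometry `ψ : X → Γ` with coarse inverse `φ`. For a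
tight cut `b` of `Γ` let `C` be the component of `ψ ⁻¹' nbhd Γ b R` containing `φ '' b`. Its
coboundary is bounded in terms of `|δb|`, hence so is that of `Kᶜ` for every component `K` of
the complement of `C`, and `Kᶜ` is tight. A path of `Γ` along the outside of `b`, pushed to `X`,
therefore meets `C` in a chain whose steps are short: edges, or excursions through some `K`
whose two ends lie on the coboundary of `Kᶜ`. On `C` the chain stays near the at most `2 |δb|`
points `φ '' cobVerts Γ b`, so it can be shortened to boundedly many steps.
-/

namespace Paper

open SimpleGraph

variable {V W : Type*}

lemma ncard_biUnion_le_mul {ι α : Type*} {t : Set ι} (ht : t.Finite) (s : ι → Set α) {m : ℕ}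
    (hs : ∀ i ∈ t, (s i).ncard ≤ m) : (⋃ i ∈ t, s i).ncard ≤ t.ncard * m := by
  calc (⋃ i ∈ t, s i).ncard ≤ ∑ i ∈ ht.toFinset, (s i).ncard := by
        simpa using ht.toFinset.set_ncard_biUnion_le s
    _ ≤ ht.toFinset.card * m := by
        simpa using Finset.sum_le_card_nsmul _ _ m fun i hi => hs i (by simpa using hi)
    _ = t.ncard * m := by rw [Set.ncard_eq_toFinset_card t ht]

def nbhd (G : SimpleGraph V) (s : Set V) (r : ℕ) : Set V :=
  {v | ∃ w ∈ s, G.dist v w ≤ r}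

def TightCutsBounded (G : SimpleGraph V) (n m : ℕ) : Prop :=
  ∀ b : Set V, MemBX G b → Tight G b → (cob G b).ncard < n →
    ∀ v ∈ cobVerts G b, ∀ w ∈ cobVerts G b, G.dist v w ≤ m

section Graph

variable {G : SimpleGraph V}

lemma dist_le_of_mem_support {u v z : V} (p : G.Walk u v) (hz : z ∈ p.support) :
    G.dist u z ≤ p.length := by
  classical
  exact (dist_le _).trans (p.length_takeUntil_le_length hz)

lemma exists_walk_of_induce_connected {s : Set V} (h : (G.induce s).Connected) {u v : V}
    (hu : u ∈ s) (hv : v ∈ s) : ∃ p : G.Walk u v, ∀ z ∈ p.support, z ∈ s := by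
  obtain ⟨p⟩ := h.preconnected ⟨u, hu⟩ ⟨v, hv⟩
  refine ⟨p.map (Embedding.induce s).toHom, fun z hz => ?_⟩
  have hz' : z ∈ (p.map (Embedding.induce s).toHom).support := hz
  rw [Walk.support_map, List.mem_map] at hz'
  obtain ⟨y, -, rfl⟩ := hz'
  exact y.2

lemma induce_connected_of_walks {s : Set V} {x₀ : V} (hx₀ : x₀ ∈ s)
    (h : ∀ z ∈ s, ∃ p : G.Walk z x₀, ∀ y ∈ p.support, y ∈ s) : (G.induce s).Connected := by
  rw [connected_iff_exists_forall_reachable]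
  refine ⟨⟨x₀, hx₀⟩, fun ⟨z, hz⟩ => ?_⟩
  obtain ⟨p, hp⟩ := h z hz
  exact ⟨(p.induce s hp).reverse⟩

lemma ncard_setOf_dist_le (hG : G.Connected) {d : ℕ} (hd : DegLe G d) (v : V) (t : ℕ) :
    {w | G.dist v w ≤ t}.Finite ∧ {w | G.dist v w ≤ t}.ncard ≤ (d + 1) ^ t := by
  induction t with
  | zero =>
    have : {w | G.dist v w ≤ 0} = {v} := by
      ext w; simp [hG.dist_eq_zero_iff, eq_comm]
    rw [this]; simp
  | succ t ih =>
    have hsub : {w | G.dist v w ≤ t + 1} ⊆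
        ⋃ u ∈ {w | G.dist v w ≤ t}, insert u (G.neighborSet u) := by
      intro w (hw : G.dist v w ≤ t + 1)
      obtain ⟨p, hp⟩ := hG.exists_walk_length_eq_dist w v
      cases p with
      | nil => exact Set.mem_biUnion (x := v) (by simp) (Set.mem_insert _ _)
      | @cons _ y _ hadj q =>
        have hy : G.dist v y ≤ t := by
          rw [SimpleGraph.dist_comm]
          have := dist_le q
          simp only [Walk.length_cons, SimpleGraph.dist_comm (u := w)] at hp
          omega
        exact Set.mem_biUnion hy (Set.mem_insert_of_mem _ hadj.symm)
    have hins : ∀ u, (insert u (G.neighborSet u)).Finite ∧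
        (insert u (G.neighborSet u)).ncard ≤ d + 1 :=
      fun u => ⟨(hd u).1.insert u, (Set.ncard_insert_le _ _).trans (by have := (hd u).2; omega)⟩
    have hfin := ih.1.biUnion fun u _ => (hins u).1
    refine ⟨hfin.subset hsub, ?_⟩
    calc _ ≤ _ := Set.ncard_le_ncard hsub hfin
      _ ≤ {w | G.dist v w ≤ t}.ncard * (d + 1) :=
          ncard_biUnion_le_mul ih.1 _ fun u _ => (hins u).2
      _ ≤ (d + 1) ^ (t + 1) := by rw [pow_succ]; exact Nat.mul_le_mul_right _ ih.2

lemma dist_le_length_mul {H : SimpleGraph V} (hG : G.Connected) {D : ℕ}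
    (hH : ∀ u v, H.Adj u v → G.dist u v ≤ D) {u v : V} (p : H.Walk u v) :
    G.dist u v ≤ p.length * D := by
  induction p with
  | nil => simp
  | @cons a b c hadj q ih =>
    calc G.dist a c ≤ G.dist a b + G.dist b c := hG.dist_triangle
      _ ≤ D + q.length * D := Nat.add_le_add (hH _ _ hadj) ih
      _ = (Walk.cons hadj q).length * D := by simp [Walk.length_cons]; ring

lemma walk_support_subset_of_adj {H : SimpleGraph V} {S : Set V}
    (hS : ∀ u v, H.Adj u v → u ∈ S ∧ v ∈ S) {u v : V} (hu : u ∈ S) (p : H.Walk u v) :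
    ∀ y ∈ p.support, y ∈ S := by
  induction p with
  | nil => simpa using hu
  | cons hadj q ih =>
    simp only [Walk.support_cons, List.mem_cons, forall_eq_or_imp]
    exact ⟨hu, ih (hS _ _ hadj).2⟩

lemma dist_le_of_reflTransGen (hG : G.Connected) {S : Set V} (hS : S.Finite) {D : ℕ}
    {s t : V} (hs : s ∈ S)
    (h : Relation.ReflTransGen (fun x y => x ∈ S ∧ y ∈ S ∧ G.dist x y ≤ D) s t) :
    G.dist s t ≤ S.ncard * D := by
  classical
  set H := SimpleGraph.fromRel fun x y => x ∈ S ∧ y ∈ S ∧ G.dist x y ≤ D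
  have hHS : ∀ u v, H.Adj u v → u ∈ S ∧ v ∈ S := by
    rintro u v ⟨-, ⟨hu, hv, -⟩ | ⟨hv, hu, -⟩⟩ <;> exact ⟨hu, hv⟩
  have hHD : ∀ u v, H.Adj u v → G.dist u v ≤ D := by
    rintro u v ⟨-, ⟨-, -, h⟩ | ⟨-, -, h⟩⟩
    · exact h
    · rwa [SimpleGraph.dist_comm]
  have hreach : H.Reachable s t := by
    induction h with
    | refl => rfl
    | @tail b c _ hbc ih =>
      by_cases hbc' : b = c
      · exact hbc' ▸ ih
      · exact ih.trans (Adj.reachable ⟨hbc', Or.inl hbc⟩)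
  obtain ⟨p, hp⟩ := hreach.exists_walk_length_eq_dist
  have hlen : p.length + 1 ≤ S.ncard := by
    rw [← Walk.length_support, ← List.toFinset_card_of_nodup
      (p.isPath_of_length_eq_dist hp).support_nodup, Set.ncard_eq_toFinset_card S hS]
    exact Finset.card_le_card fun y hy => by
      simpa using walk_support_subset_of_adj hHS hs p y (List.mem_toFinset.1 hy)
  calc G.dist s t ≤ p.length * D := dist_le_length_mul hG hHD p
    _ ≤ S.ncard * D := Nat.mul_le_mul_right _ (by omega)

lemma dist_le_of_reflTransGen_nbhd (hG : G.Connected) {S : Set V} (hS : S.Finite) {D τ : ℕ}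
    {x y : V} (hx : x ∈ nbhd G S τ)
    (h : Relation.ReflTransGen (fun x y => x ∈ nbhd G S τ ∧ y ∈ nbhd G S τ ∧ G.dist x y ≤ D) x y) :
    G.dist x y ≤ τ + S.ncard * (D + 2 * τ) + τ := by
  classical
  let f : V → V := fun z => if hz : z ∈ nbhd G S τ then hz.choose else z
  have hf : ∀ z ∈ nbhd G S τ, f z ∈ S ∧ G.dist z (f z) ≤ τ := fun z hz => by
    simpa only [f, dif_pos hz] using hz.choose_spec
  have hy : y ∈ nbhd G S τ := by
    rcases h.cases_tail with rfl | ⟨_, _, -, hy, -⟩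
    exacts [hx, hy]
  have hchain : Relation.ReflTransGen (fun s t => s ∈ S ∧ t ∈ S ∧ G.dist s t ≤ D + 2 * τ)
      (f x) (f y) := by
    refine h.lift f fun a b ⟨ha, hb, hab⟩ => ⟨(hf a ha).1, (hf b hb).1, ?_⟩
    have h₁ := hG.dist_triangle (u := f a) (v := a) (w := f b)
    have h₂ := hG.dist_triangle (u := a) (v := b) (w := f b)
    have h₃ := (hf a ha).2
    have h₄ := (hf b hb).2
    rw [SimpleGraph.dist_comm (u := f a) (v := a)] at h₁
    omega
  have h₁ := hG.dist_triangle (u := x) (v := f x) (w := y)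
  have h₂ := hG.dist_triangle (u := f x) (v := f y) (w := y)
  have h₃ := dist_le_of_reflTransGen hG hS (hf x hx).1 hchain
  have h₄ := (hf x hx).2
  have h₅ := (hf y hy).2
  rw [SimpleGraph.dist_comm (u := f y) (v := y)] at h₂
  omega

end Graph

section Coboundary

variable {G : SimpleGraph V} {b : Set V}

lemma mem_cob_iff {x y : V} :
    s(x, y) ∈ cob G b ↔ G.Adj x y ∧ (x ∈ b ∧ y ∉ b ∨ y ∈ b ∧ x ∉ b) := by
  constructor
  · rintro ⟨p, q, hpq, hadj, hp, hq⟩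
    rcases Sym2.eq_iff.1 hpq with ⟨rfl, rfl⟩ | ⟨rfl, rfl⟩
    · exact ⟨hadj, .inl ⟨hp, hq⟩⟩
    · exact ⟨hadj.symm, .inr ⟨hp, hq⟩⟩
  · rintro ⟨hadj, ⟨hx, hy⟩ | ⟨hy, hx⟩⟩
    · exact ⟨x, y, rfl, hadj, hx, hy⟩
    · exact ⟨y, x, Sym2.eq_swap, hadj.symm, hy, hx⟩

lemma cob_compl : cob G bᶜ = cob G b := by
  ext e
  induction e using Sym2.ind with
  | _ x y => simp only [mem_cob_iff, Set.mem_compl_iff, not_not]; tauto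

lemma cobVerts_compl : cobVerts G bᶜ = cobVerts G b := by
  simp only [cobVerts, cob_compl]

lemma Tight.compl (h : Tight G b) : Tight G bᶜ :=
  ⟨h.2, by rw [compl_compl]; exact h.1⟩

lemma exists_adj_of_mem_cobVerts {v : V} (hv : v ∈ cobVerts G b) :
    ∃ v₁ ∈ b, ∃ v₂ ∉ b, G.Adj v₁ v₂ ∧ (v = v₁ ∨ v = v₂) := by
  obtain ⟨w, hw⟩ := hv
  rcases (mem_cob_iff.1 hw) with ⟨hadj, ⟨hv, hw⟩ | ⟨hw, hv⟩⟩
  · exact ⟨v, hv, w, hw, hadj, .inl rfl⟩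
  · exact ⟨w, hw, v, hv, hadj.symm, .inr rfl⟩

lemma ncard_cobVerts_le (hb : (cob G b).Finite) :
    (cobVerts G b).Finite ∧ (cobVerts G b).ncard ≤ (cob G b).ncard * 2 := by
  have hsub : cobVerts G b ⊆ ⋃ e ∈ cob G b, {x | x ∈ e} :=
    fun v ⟨w, hw⟩ => Set.mem_biUnion hw (Sym2.mem_mk_left v w)
  have hpair : ∀ e : Sym2 V, {x | x ∈ e}.Finite ∧ {x | x ∈ e}.ncard ≤ 2 := by
    intro e
    induction e using Sym2.ind with
    | _ x y =>
      have : {z | z ∈ s(x, y)} = {x, y} := by ext; simp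
      exact this ▸ ⟨Set.toFinite _, (Set.ncard_insert_le _ _).trans (by simp)⟩
  have hfin := hb.biUnion fun e _ => (hpair e).1
  exact ⟨hfin.subset hsub, (Set.ncard_le_ncard hsub hfin).trans
    (ncard_biUnion_le_mul hb _ fun e _ => (hpair e).2)⟩

lemma ncard_cob_le_of_endpoints {a T : Set V} (hT : T.Finite)
    (h : ∀ x y, G.Adj x y → x ∈ a → y ∉ a → x ∈ T ∧ y ∈ T) :
    (cob G a).Finite ∧ (cob G a).ncard ≤ T.ncard * T.ncard := by
  have hsub : cob G a ⊆ (fun p : V × V => s(p.1, p.2)) '' (T ×ˢ T) := by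
    rintro _ ⟨x, y, rfl, hadj, hx, hy⟩
    exact ⟨(x, y), h x y hadj hx hy, rfl⟩
  have hfin := (hT.prod hT).image (fun p : V × V => s(p.1, p.2))
  refine ⟨hfin.subset hsub, (Set.ncard_le_ncard hsub hfin).trans ?_⟩
  exact (Set.ncard_image_le (hT.prod hT)).trans Set.ncard_prod.le

lemma exists_mem_cobVerts_dist_le (hG : G.Connected) {z z' : V} (hz : z ∈ b) (hz' : z' ∉ b) :
    ∃ s ∈ cobVerts G b, G.dist z s ≤ G.dist z z' := by
  obtain ⟨p, hp⟩ := hG.exists_walk_length_eq_dist z z'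
  obtain ⟨d, hd, hfst, hsnd⟩ := p.exists_boundary_dart b hz hz'
  refine ⟨d.fst, ⟨d.snd, ⟨_, _, rfl, d.adj, hfst, hsnd⟩⟩, hp ▸ ?_⟩
  exact dist_le_of_mem_support p (p.dart_fst_mem_support_of_mem_darts hd)

lemma exists_mem_cobVerts_dist_le_of_mem_nbhd (hG : G.Connected) {z : V} {r r' : ℕ}
    (h : z ∈ nbhd G b r) (h' : z ∈ nbhd G bᶜ r') :
    ∃ s ∈ cobVerts G b, G.dist z s ≤ 2 * r + r' := by
  obtain ⟨w, hw, hzw⟩ := h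
  obtain ⟨w', hw', hzw'⟩ := h'
  obtain ⟨s, hs, hws⟩ := exists_mem_cobVerts_dist_le hG hw hw'
  refine ⟨s, hs, ?_⟩
  have h₁ := hG.dist_triangle (u := z) (v := w) (w := s)
  have h₂ := hG.dist_triangle (u := w) (v := z) (w := w')
  rw [SimpleGraph.dist_comm (u := w) (v := z)] at h₂
  omega

lemma Tight.exists_walk_nbhd_compl (h : Tight G b)
    {u₁ u₂ v₁ v₂ : V} (hu₂ : u₂ ∉ b) (hv₂ : v₂ ∉ b) (hu : G.Adj u₁ u₂) (hv : G.Adj v₁ v₂) :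
    ∃ p : G.Walk u₁ v₁, ∀ z ∈ p.support, z ∈ nbhd G bᶜ 1 := by
  obtain ⟨p, hp⟩ := exists_walk_of_induce_connected h.2 hu₂ hv₂
  refine ⟨.cons hu (p.append (.cons hv.symm .nil)), fun z hz => ?_⟩
  simp only [Walk.support_cons, Walk.support_append, Walk.support_nil, List.tail_cons,
    List.mem_cons, List.mem_append, List.not_mem_nil, or_false] at hz
  rcases hz with rfl | hz | rfl
  · exact ⟨u₂, hu₂, (dist_eq_one_iff_adj.2 hu).le⟩
  · exact ⟨z, hp z hz, by simp⟩
  · exact ⟨v₂, hv₂, (dist_eq_one_iff_adj.2 hv).le⟩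

end Coboundary

namespace ReachOut

variable {G : SimpleGraph V} {S : Set V} {x y z : V}

lemma notMem_left (h : ReachOut G S x y) : x ∉ S :=
  h.elim fun p hp => hp x p.start_mem_support

lemma notMem_right (h : ReachOut G S x y) : y ∉ S :=
  h.elim fun p hp => hp y p.end_mem_support

lemma refl (hx : x ∉ S) : ReachOut G S x x :=
  ⟨.nil, by simpa using hx⟩

lemma trans (h₁ : ReachOut G S x y) (h₂ : ReachOut G S y z) : ReachOut G S x z := by
  obtain ⟨p, hp⟩ := h₁
  obtain ⟨q, hq⟩ := h₂
  refine ⟨p.append q, fun v hv => ?_⟩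
  rcases List.mem_append.1 (Walk.support_append p q ▸ hv) with hv | hv
  · exact hp v hv
  · exact hq v (List.mem_of_mem_tail hv)

lemma of_adj (hadj : G.Adj x y) (hx : x ∉ S) (hy : y ∉ S) : ReachOut G S x y :=
  ⟨.cons hadj .nil, by simp [hx, hy]⟩

lemma of_mem_support {p : G.Walk x y} (hp : ∀ v ∈ p.support, v ∉ S) (hz : z ∈ p.support) :
    ReachOut G S x z := by
  classical
  exact ⟨p.takeUntil z hz, fun v hv => hp v (p.support_takeUntil_subset_support hz hv)⟩

end ReachOut

section Components

variable {G : SimpleGraph V} {C : Set V} {x : V}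

lemma cob_setOf_reachOut_subset : cob G {z | ReachOut G C x z} ⊆ cob G C := by
  rintro _ ⟨p, q, rfl, hadj, hp, hq⟩
  have hqC : q ∈ C := by_contra fun h => hq (hp.trans (.of_adj hadj hp.notMem_right h))
  exact mem_cob_iff.2 ⟨hadj, .inr ⟨hqC, hp.notMem_right⟩⟩

lemma induce_setOf_reachOut_connected (hx : x ∉ C) :
    (G.induce {z | ReachOut G C x z}).Connected := by
  refine induce_connected_of_walks (ReachOut.refl hx) fun z ⟨p, hp⟩ => ⟨p.reverse, ?_⟩
  intro y hy
  exact ReachOut.of_mem_support hp (by simpa using hy)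

lemma induce_compl_setOf_reachOut_connected (hG : G.Connected) (hC : (G.induce C).Connected) :
    (G.induce {z | ReachOut G C x z}ᶜ).Connected := by
  set K := {z | ReachOut G C x z}
  obtain ⟨⟨x₀, hx₀⟩⟩ := hC.nonempty
  have hCK : C ⊆ Kᶜ := fun z hz hzK => hzK.notMem_right hz
  have hinC : ∀ z ∈ C, ∃ p : G.Walk z x₀, ∀ y ∈ p.support, y ∈ Kᶜ := fun z hz =>
    (exists_walk_of_induce_connected hC hz hx₀).imp fun _ hp y hy => hCK (hp y hy)
  suffices h : ∀ {z w : V} (p : G.Walk z w), w ∈ C → z ∉ K →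
      ∃ p : G.Walk z x₀, ∀ y ∈ p.support, y ∈ Kᶜ from
    induce_connected_of_walks (hCK hx₀) fun z hz =>
      h (hG.preconnected z x₀).some hx₀ hz
  intro z w p
  induction p with
  | nil => exact fun hw _ => hinC _ hw
  | @cons z z' w hadj p ih =>
    intro hw hzK
    by_cases hzC : z ∈ C
    · exact hinC z hzC
    have hz'K : z' ∉ K := fun hz' =>
      hzK (hz'.trans (.of_adj hadj.symm hz'.notMem_right hzC))
    obtain ⟨q, hq⟩ := ih hw hz'K
    exact ⟨.cons hadj q, by simpa [hzK] using hq⟩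

lemma tight_compl_setOf_reachOut (hG : G.Connected) (hC : (G.induce C).Connected)
    (hx : x ∉ C) : Tight G {z | ReachOut G C x z}ᶜ :=
  ⟨induce_compl_setOf_reachOut_connected hG hC, by
    rw [compl_compl]; exact induce_setOf_reachOut_connected hx⟩

/-- `x` and `y` are the end vertices of a walk whose inner vertices all avoid `C`. -/
def IsExcursion (G : SimpleGraph V) (C : Set V) (x y : V) : Prop :=
  ∃ x' y', G.Adj x x' ∧ G.Adj y' y ∧ ReachOut G C x' y'

lemma dist_le_of_isExcursion (hG : G.Connected) (hC : (G.induce C).Connected) {N M : ℕ}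
    (hM : TightCutsBounded G N M) (hfin : (cob G C).Finite) (hN : (cob G C).ncard < N)
    {x y : V} (hx : x ∈ C) (hy : y ∈ C) (h : IsExcursion G C x y) : G.dist x y ≤ M := by
  obtain ⟨x', y', hxx', hyy', hx'y'⟩ := h
  set K := {z | ReachOut G C x' z}
  have hsub : cob G Kᶜ ⊆ cob G C := cob_compl (b := K) ▸ cob_setOf_reachOut_subset
  refine hM Kᶜ (hfin.subset hsub) (tight_compl_setOf_reachOut hG hC hx'y'.notMem_left)
    ((Set.ncard_le_ncard hsub hfin).trans_lt hN) x ?_ y ?_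
  · exact ⟨x', ⟨x, x', rfl, hxx', fun h => h.notMem_right hx, not_not.2 (.refl hx'y'.notMem_left)⟩⟩
  · exact ⟨y', ⟨y, y', rfl, hyy'.symm, fun h => h.notMem_right hy, not_not.2 hx'y'⟩⟩

/-- The steps of the chain are the walk's edges inside `C` and its excursions outside `C`. -/
lemma reflTransGen_of_walk {D : ℕ} (hD : 1 ≤ D)
    (hexc : ∀ x ∈ C, ∀ y ∈ C, IsExcursion G C x y → G.dist x y ≤ D) {P : V → Prop}
    {u v : V} (p : G.Walk u v) (hu : u ∈ C) (hv : v ∈ C) (hP : ∀ z ∈ p.support, z ∈ C → P z) :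
    Relation.ReflTransGen (fun x y => P x ∧ P y ∧ G.dist x y ≤ D) u v := by
  suffices h : ∀ {a : V} (q : G.Walk a v), (∀ z ∈ q.support, z ∈ C → P z) → ∀ t ∈ C, P t →
      (a = t ∨ a ∉ C ∧ ∃ t', G.Adj t t' ∧ ReachOut G C t' a) →
      Relation.ReflTransGen (fun x y => P x ∧ P y ∧ G.dist x y ≤ D) t v from
    h p hP u hu (hP u p.start_mem_support hu) (.inl rfl)
  intro a q
  clear hP hu p
  revert hv
  induction q with
  | nil =>
    rintro hv - t - - (rfl | ⟨ha, -⟩)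
    · rfl
    · exact absurd hv ha
  | @cons a a' w hadj q ih =>
    intro hv hq t ht hPt hstate
    have hq' : ∀ z ∈ q.support, z ∈ C → P z := fun z hz => hq z (by simp [hz])
    by_cases ha' : a' ∈ C
    · have hPa' : P a' := hq a' (by simp) ha'
      have hdist : G.dist t a' ≤ D := by
        rcases hstate with rfl | ⟨-, t', htt', hreach⟩
        · exact (dist_le (.cons hadj .nil)).trans hD
        · exact hexc t ht a' ha' ⟨t', a, htt', hadj, hreach⟩
      exact .head ⟨hPt, hPa', hdist⟩ (ih hv hq' a' ha' hPa' (.inl rfl))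
    · refine ih hv hq' t ht hPt (.inr ⟨ha', ?_⟩)
      rcases hstate with rfl | ⟨ha, t', htt', hreach⟩
      · exact ⟨a', hadj, .refl ha'⟩
      · exact ⟨t', htt', hreach.trans (.of_adj hadj ha ha')⟩

end Components

lemma exists_walk_near_map {X : SimpleGraph V} {Γ : SimpleGraph W} (hX : X.Connected)
    {f : W → V} {K : ℕ} (hf : ∀ z z', Γ.Adj z z' → X.dist (f z) (f z') ≤ K) {z₀ z₁ : W}
    (p : Γ.Walk z₀ z₁) :
    ∃ q : X.Walk (f z₀) (f z₁), ∀ x ∈ q.support, ∃ z ∈ p.support, X.dist (f z) x ≤ K := by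
  induction p with
  | nil => exact ⟨.nil, fun x hx => ⟨_, Walk.start_mem_support _, by simp_all⟩⟩
  | @cons a b c hadj p ih =>
    obtain ⟨q, hq⟩ := ih
    obtain ⟨g, hg⟩ := hX.exists_walk_length_eq_dist (f a) (f b)
    refine ⟨g.append q, fun x hx => ?_⟩
    rcases List.mem_append.1 (Walk.support_append g q ▸ hx) with hx | hx
    · exact ⟨a, Walk.start_mem_support _,
        (dist_le_of_mem_support g hx).trans (hg ▸ hf a b hadj)⟩
    · obtain ⟨z, hz, hzx⟩ := hq x (List.mem_of_mem_tail hx)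
      exact ⟨z, by simp [hz], hzx⟩

/-- A quasi-isometry `ψ` together with a coarse inverse `φ`, with all constants merged into
one natural number `L`. -/
structure NatQI (X : SimpleGraph V) (Γ : SimpleGraph W) (L : ℕ) (ψ : V → W) (φ : W → V) :
    Prop where
  dist_map_le (x y : V) : Γ.dist (ψ x) (ψ y) ≤ L * X.dist x y + L
  dist_le_dist_map (x y : V) : X.dist x y ≤ L * Γ.dist (ψ x) (ψ y) + L
  dist_map_inv_le (w : W) : Γ.dist w (ψ (φ w)) ≤ L

lemma IsQI.exists_natQI {X : SimpleGraph V} {Γ : SimpleGraph W} {l e : ℝ} {ψ : V → W}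
    (hl : 1 ≤ l) (he : 0 ≤ e) (h : IsQI X Γ l e ψ) : ∃ (L : ℕ) (φ : W → V), NatQI X Γ L ψ φ := by
  choose φ hφ using h.2
  have hL : l * (e + 1) ≤ ⌈l * (e + 1)⌉₊ := Nat.le_ceil _
  have hle : l ≤ ⌈l * (e + 1)⌉₊ := by nlinarith
  have hee : l * e ≤ ⌈l * (e + 1)⌉₊ := by nlinarith
  refine ⟨⌈l * (e + 1)⌉₊, φ, fun x y => ?_, fun x y => ?_, fun w => ?_⟩
  · have := (h.1 x y).2
    have hX : (0 : ℝ) ≤ X.dist x y := Nat.cast_nonneg _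
    exact_mod_cast (show (Γ.dist (ψ x) (ψ y) : ℝ) ≤ ⌈l * (e + 1)⌉₊ * X.dist x y + ⌈l * (e + 1)⌉₊
      by nlinarith)
  · have := (h.1 x y).1
    have hΓ : (0 : ℝ) ≤ Γ.dist (ψ x) (ψ y) := Nat.cast_nonneg _
    have h' : (X.dist x y : ℝ) ≤ l * Γ.dist (ψ x) (ψ y) + l * e := by
      rw [div_sub' (by positivity), div_le_iff₀ (by positivity)] at this
      linarith
    exact_mod_cast (show (X.dist x y : ℝ) ≤ ⌈l * (e + 1)⌉₊ * Γ.dist (ψ x) (ψ y) + ⌈l * (e + 1)⌉₊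
      by nlinarith)
  · exact_mod_cast (show (Γ.dist w (ψ (φ w)) : ℝ) ≤ ⌈l * (e + 1)⌉₊ by nlinarith [hφ w])

namespace NatQI

variable {X : SimpleGraph V} {Γ : SimpleGraph W} {L : ℕ} {ψ : V → W} {φ : W → V}

lemma dist_le_inv (hΓ : Γ.Connected) (h : NatQI X Γ L ψ φ) {x : V} {w : W} {k : ℕ}
    (hk : Γ.dist (ψ x) w ≤ k) : X.dist x (φ w) ≤ L * (k + L) + L := by
  have h₁ := hΓ.dist_triangle (u := ψ x) (v := w) (w := ψ (φ w))
  have h₂ := h.dist_map_inv_le w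
  calc X.dist x (φ w) ≤ L * Γ.dist (ψ x) (ψ (φ w)) + L := h.dist_le_dist_map _ _
    _ ≤ L * (k + L) + L := by gcongr; omega

lemma dist_le_dist_inv (hΓ : Γ.Connected) (h : NatQI X Γ L ψ φ) (z z' : W) :
    Γ.dist z z' ≤ L * X.dist (φ z) (φ z') + 3 * L := by
  have h₁ := hΓ.dist_triangle (u := z) (v := ψ (φ z)) (w := z')
  have h₂ := hΓ.dist_triangle (u := ψ (φ z)) (v := ψ (φ z')) (w := z')
  have h₃ := h.dist_map_le (φ z) (φ z')
  have h₄ := h.dist_map_inv_le z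
  have h₅ := h.dist_map_inv_le z'
  rw [SimpleGraph.dist_comm (u := ψ (φ z'))] at h₂
  omega

lemma exists_walk_near (hX : X.Connected) (hΓ : Γ.Connected) (h : NatQI X Γ L ψ φ) :
    ∃ R : ℕ, ∀ {z₀ z₁ : W} (p : Γ.Walk z₀ z₁), ∃ q : X.Walk (φ z₀) (φ z₁),
      ∀ x ∈ q.support, ∃ z ∈ p.support, Γ.dist (ψ x) z ≤ R := by
  have hstep : ∀ z z', Γ.Adj z z' → X.dist (φ z) (φ z') ≤ L * (L + 1 + L) + L := by
    intro z z' hzz'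
    refine h.dist_le_inv hΓ ?_
    have := hΓ.dist_triangle (u := ψ (φ z)) (v := z) (w := z')
    rw [SimpleGraph.dist_comm (u := ψ (φ z)) (v := z)] at this
    have := h.dist_map_inv_le z
    have := dist_le (Walk.cons hzz' .nil)
    simp only [Walk.length_cons, Walk.length_nil] at this
    omega
  refine ⟨L * (L * (L + 1 + L) + L) + L + L, fun p => ?_⟩
  obtain ⟨q, hq⟩ := exists_walk_near_map hX hstep p
  refine ⟨q, fun x hx => ?_⟩
  obtain ⟨z, hz, hzx⟩ := hq x hx
  refine ⟨z, hz, ?_⟩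
  have h₁ := hΓ.dist_triangle (u := ψ x) (v := ψ (φ z)) (w := z)
  have h₂ := h.dist_map_le x (φ z)
  have h₃ := h.dist_map_inv_le z
  have h₄ : L * X.dist x (φ z) ≤ L * (L * (L + 1 + L) + L) := by
    rw [SimpleGraph.dist_comm]; exact Nat.mul_le_mul_left L hzx
  rw [SimpleGraph.dist_comm (u := ψ (φ z))] at h₁
  omega

lemma ncard_preimage_nbhd_le (hX : X.Connected) (hΓ : Γ.Connected) {d : ℕ} (hd : DegLe X d)
    (h : NatQI X Γ L ψ φ) {S : Set W} (hS : S.Finite) (r : ℕ) :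
    (ψ ⁻¹' nbhd Γ S r).Finite ∧
      (ψ ⁻¹' nbhd Γ S r).ncard ≤ S.ncard * (d + 1) ^ (L * (2 * r) + L) := by
  have heq : ψ ⁻¹' nbhd Γ S r = ⋃ s ∈ S, {x | Γ.dist (ψ x) s ≤ r} := by
    ext x; simp [nbhd]
  have hball : ∀ s : W, {x | Γ.dist (ψ x) s ≤ r}.Finite ∧
      {x | Γ.dist (ψ x) s ≤ r}.ncard ≤ (d + 1) ^ (L * (2 * r) + L) := by
    intro s
    rcases Set.eq_empty_or_nonempty {x | Γ.dist (ψ x) s ≤ r} with he | ⟨x₀, hx₀⟩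
    · simp [he]
    have hsub : {x | Γ.dist (ψ x) s ≤ r} ⊆ {x | X.dist x₀ x ≤ L * (2 * r) + L} := by
      intro x (hx : Γ.dist (ψ x) s ≤ r)
      have h₁ := hΓ.dist_triangle (u := ψ x₀) (v := s) (w := ψ x)
      rw [SimpleGraph.dist_comm (u := s)] at h₁
      have h₂ : Γ.dist (ψ x₀) (ψ x) ≤ 2 * r := by
        have : Γ.dist (ψ x₀) s ≤ r := hx₀
        omega
      exact (h.dist_le_dist_map x₀ x).trans (by gcongr)
    obtain ⟨hfin, hcard⟩ := ncard_setOf_dist_le hX hd x₀ (L * (2 * r) + L)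
    exact ⟨hfin.subset hsub, (Set.ncard_le_ncard hsub hfin).trans hcard⟩
  rw [heq]
  exact ⟨hS.biUnion fun s _ => (hball s).1, ncard_biUnion_le_mul hS _ fun s _ => (hball s).2⟩

/-- The edges leaving the preimage of an `R`-neighbourhood of `b` lie near `δb`; their number
is therefore bounded in terms of `|δb|` alone. -/
lemma ncard_cob_preimage_nbhd_lt (hX : X.Connected) (hΓ : Γ.Connected) {d : ℕ}
    (hd : DegLe X d) (h : NatQI X Γ L ψ φ) (R n : ℕ) :
    ∃ N : ℕ, ∀ b : Set W, (cob Γ b).Finite → (cob Γ b).ncard < n →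
      (cob X (ψ ⁻¹' nbhd Γ b R)).Finite ∧ (cob X (ψ ⁻¹' nbhd Γ b R)).ncard < N := by
  set t := n * 2 * (d + 1) ^ (L * (2 * (2 * R + 4 * L)) + L)
  refine ⟨t * t + 1, fun b hfin hn => ?_⟩
  obtain ⟨hvfin, hvcard⟩ := ncard_cobVerts_le hfin
  obtain ⟨hTfin, hTcard⟩ := h.ncard_preimage_nbhd_le hX hΓ hd hvfin (2 * R + 4 * L)
  have hend : ∀ x y, X.Adj x y → x ∈ ψ ⁻¹' nbhd Γ b R → y ∉ ψ ⁻¹' nbhd Γ b R →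
      x ∈ ψ ⁻¹' nbhd Γ (cobVerts Γ b) (2 * R + 4 * L) ∧
        y ∈ ψ ⁻¹' nbhd Γ (cobVerts Γ b) (2 * R + 4 * L) := by
    intro x y hxy hx hy
    have hψxy : Γ.dist (ψ x) (ψ y) ≤ 2 * L := by
      have := h.dist_map_le x y
      rw [dist_eq_one_iff_adj.2 hxy] at this
      omega
    have hψy : ψ y ∉ b := fun hb => hy ⟨ψ y, hb, by simp⟩
    obtain ⟨s, hs, hxs⟩ := exists_mem_cobVerts_dist_le_of_mem_nbhd hΓ hx ⟨ψ y, hψy, hψxy⟩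
    have := hΓ.dist_triangle (u := ψ y) (v := ψ x) (w := s)
    rw [SimpleGraph.dist_comm (u := ψ y) (v := ψ x)] at this
    exact ⟨⟨s, hs, by omega⟩, ⟨s, hs, by omega⟩⟩
  obtain ⟨hcfin, hccard⟩ := ncard_cob_le_of_endpoints hTfin hend
  have ht : (ψ ⁻¹' nbhd Γ (cobVerts Γ b) (2 * R + 4 * L)).ncard ≤ t :=
    hTcard.trans (Nat.mul_le_mul_right _ (by omega))
  exact ⟨hcfin, Nat.lt_succ_of_le (hccard.trans (Nat.mul_le_mul ht ht))⟩

lemma mem_nbhd_image_cobVerts (hΓ : Γ.Connected) (h : NatQI X Γ L ψ φ) {b : Set W} {x : V}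
    {r r' : ℕ} (hx : ψ x ∈ nbhd Γ b r) (hx' : ψ x ∈ nbhd Γ bᶜ r') :
    x ∈ nbhd X (φ '' cobVerts Γ b) (L * (2 * r + r' + L) + L) := by
  obtain ⟨s, hs, hxs⟩ := exists_mem_cobVerts_dist_le_of_mem_nbhd hΓ hx hx'
  exact ⟨φ s, Set.mem_image_of_mem φ hs, h.dist_le_inv hΓ hxs⟩

lemma dist_inv_le_of_tight (hX : X.Connected) (hΓ : Γ.Connected) (h : NatQI X Γ L ψ φ)
    {R : ℕ} (hR : ∀ {z₀ z₁ : W} (p : Γ.Walk z₀ z₁), ∃ q : X.Walk (φ z₀) (φ z₁),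
      ∀ x ∈ q.support, ∃ z ∈ p.support, Γ.dist (ψ x) z ≤ R)
    {N M : ℕ} (hM : TightCutsBounded X N M) {b : Set W} (htight : Tight Γ b)
    (hb : (cob Γ b).Finite) (hfin : (cob X (ψ ⁻¹' nbhd Γ b R)).Finite)
    (hN : (cob X (ψ ⁻¹' nbhd Γ b R)).ncard < N) {u₁ u₂ v₁ v₂ : W} (hu₁ : u₁ ∈ b) (hu₂ : u₂ ∉ b)
    (hv₁ : v₁ ∈ b) (hv₂ : v₂ ∉ b) (hu : Γ.Adj u₁ u₂) (hv : Γ.Adj v₁ v₂) :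
    X.dist (φ u₁) (φ v₁) ≤ (L * (3 * R + 1 + L) + L) + (cobVerts Γ b).ncard *
      (M + 1 + 2 * (L * (3 * R + 1 + L) + L)) + (L * (3 * R + 1 + L) + L) := by
  set a := ψ ⁻¹' nbhd Γ b R
  set C := {x | ReachOut X aᶜ (φ u₁) x}
  obtain ⟨pb, hpb⟩ := exists_walk_of_induce_connected htight.1 hu₁ hv₁
  obtain ⟨qb, hqb⟩ := hR pb
  have hqa : ∀ x ∈ qb.support, x ∉ aᶜ := fun x hx =>
    not_not.2 ((hqb x hx).imp fun z ⟨hz, hxz⟩ => ⟨hpb z hz, hxz⟩)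
  have hu₁C : φ u₁ ∈ C := .of_mem_support hqa qb.start_mem_support
  have hv₁C : φ v₁ ∈ C := .of_mem_support hqa qb.end_mem_support
  have hC : (X.induce C).Connected := induce_setOf_reachOut_connected (hqa _ qb.start_mem_support)
  have hcob : cob X C ⊆ cob X a := cob_compl (b := a) ▸ cob_setOf_reachOut_subset
  have hexc : ∀ x ∈ C, ∀ y ∈ C, IsExcursion X C x y → X.dist x y ≤ M + 1 :=
    fun x hx y hy hxy => (dist_le_of_isExcursion hX hC hM (hfin.subset hcob)
      ((Set.ncard_le_ncard hcob hfin).trans_lt hN) hx hy hxy).trans (Nat.le_succ M)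
  obtain ⟨pc, hpc⟩ := htight.exists_walk_nbhd_compl hu₂ hv₂ hu hv
  obtain ⟨qc, hqc⟩ := hR pc
  have hnear : ∀ x ∈ qc.support, x ∈ C →
      x ∈ nbhd X (φ '' cobVerts Γ b) (L * (2 * R + (R + 1) + L) + L) := by
    intro x hx hxC
    obtain ⟨z, hz, hxz⟩ := hqc x hx
    obtain ⟨w, hw, hzw⟩ := hpc z hz
    have := hΓ.dist_triangle (u := ψ x) (v := z) (w := w)
    exact h.mem_nbhd_image_cobVerts hΓ (not_not.1 hxC.notMem_right) ⟨w, hw, by omega⟩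
  have hchain := reflTransGen_of_walk (Nat.le_add_left 1 M) hexc qc hu₁C hv₁C hnear
  have hτ : L * (2 * R + (R + 1) + L) + L = L * (3 * R + 1 + L) + L := by ring
  rw [hτ] at hchain hnear
  exact (dist_le_of_reflTransGen_nbhd hX ((ncard_cobVerts_le hb).1.image φ)
    (hnear _ qc.start_mem_support hu₁C) hchain).trans
    (by gcongr; exact Set.ncard_image_le (ncard_cobVerts_le hb).1)

end NatQI

section QuasiTransitive

variable {G : SimpleGraph V}

lemma subset_of_induce_connected {s m : Set V} (hs : (G.induce s).Connected)
    (hcob : ∀ x y, G.Adj x y → x ∈ s → y ∈ s → s(x, y) ∉ cob G m) {x : V} (hx : x ∈ s)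
    (hxm : x ∈ m) : s ⊆ m := by
  intro z hz
  by_contra hzm
  obtain ⟨p, hp⟩ := exists_walk_of_induce_connected hs hx hz
  obtain ⟨d, hd, hfst, hsnd⟩ := p.exists_boundary_dart m hxm hzm
  exact hcob _ _ d.adj (hp _ (p.dart_fst_mem_support_of_mem_darts hd))
    (hp _ (p.dart_snd_mem_support_of_mem_darts hd)) ⟨_, _, rfl, d.adj, hfst, hsnd⟩

lemma tight_eq_of_cob_subset {c m : Set V} (hc : Tight G c) (hsub : cob G m ⊆ cob G c)
    {x y : V} (hxc : x ∈ c) (hxm : x ∈ m) (hyc : y ∉ c) (hym : y ∉ m) : c = m := by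
  have hside : ∀ s : Set V, (s = c ∨ s = cᶜ) → ∀ x y, G.Adj x y → x ∈ s → y ∈ s →
      s(x, y) ∉ cob G m := by
    rintro s hs x y - hx hy hxy
    rcases mem_cob_iff.1 (hsub hxy) with ⟨-, ⟨hx', hy'⟩ | ⟨hy', hx'⟩⟩ <;>
      rcases hs with rfl | rfl <;> simp_all
  refine (subset_of_induce_connected hc.1 (hside c (.inl rfl)) hxc hxm).antisymm ?_
  refine Set.compl_subset_compl.1 (subset_of_induce_connected hc.2 ?_ hyc hym)
  simpa only [cob_compl] using hside cᶜ (.inr rfl)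

def ufLim {ι : Type*} (U : Ultrafilter ι) (c : ι → Set V) : Set V :=
  {v | ∀ᶠ j in U, v ∈ c j}

lemma cob_ufLim {ι : Type*} (U : Ultrafilter ι) (c : ι → Set V) {n : ℕ}
    (hc : ∀ j, (cob G (c j)).Finite ∧ (cob G (c j)).ncard < n) :
    (cob G (ufLim U c)).Finite ∧ ∀ᶠ j in U, cob G (ufLim U c) ⊆ cob G (c j) := by
  have hedge : ∀ f ∈ cob G (ufLim U c), ∀ᶠ j in U, f ∈ cob G (c j) := by
    rintro _ ⟨x, y, rfl, hxy, hx, hy⟩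
    filter_upwards [hx, Ultrafilter.eventually_not.2 hy] with j hxj hyj
    exact ⟨x, y, rfl, hxy, hxj, hyj⟩
  have hsub : ∀ t ⊆ cob G (ufLim U c), t.Finite → ∀ᶠ j in U, t ⊆ cob G (c j) :=
    fun t ht htf => (Filter.eventually_all_finite htf).2 fun f hf => hedge f (ht hf)
  have hfin : (cob G (ufLim U c)).Finite := by
    by_contra hinf
    obtain ⟨t, ht, htf, htn⟩ := Set.Infinite.exists_subset_ncard_eq hinf n
    obtain ⟨j, hj⟩ := (hsub t ht htf).exists
    have := (Set.ncard_le_ncard hj (hc j).1).trans_lt (hc j).2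
    omega
  exact ⟨hfin, hsub _ le_rfl hfin⟩

lemma finite_setOf_tight (x y : V) (n : ℕ) :
    {c : Set V | Tight G c ∧ (cob G c).Finite ∧ (cob G c).ncard < n ∧ x ∈ c ∧ y ∉ c}.Finite := by
  by_contra hinf
  set e := Set.Infinite.natEmbedding _ hinf
  set c : ℕ → Set V := fun j => (e j).1
  have hc : ∀ j, Tight G (c j) ∧ (cob G (c j)).Finite ∧ (cob G (c j)).ncard < n ∧
      x ∈ c j ∧ y ∉ c j := fun j => (e j).2
  set U := Filter.hyperfilter ℕ
  obtain ⟨-, hsub⟩ := cob_ufLim U c fun j => ⟨(hc j).2.1, (hc j).2.2.1⟩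
  have hx : x ∈ ufLim U c := Filter.Eventually.of_forall fun j => (hc j).2.2.2.1
  have hy : y ∉ ufLim U c :=
    Ultrafilter.eventually_not.1 (Filter.Eventually.of_forall fun j => (hc j).2.2.2.2)
  have heq : ∀ᶠ j in U, c j = ufLim U c := hsub.mono fun j hj =>
    tight_eq_of_cob_subset (hc j).1 hj (hc j).2.2.2.1 hx (hc j).2.2.2.2 hy
  have hsingle : {j | c j = ufLim U c}.Subsingleton := fun i hi j hj =>
    e.injective (Subtype.ext (hi.trans hj.symm))
  exact hsingle.finite.notMem_hyperfilter heq

section Iso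

variable (α : G ≃g G) {c : Set V}

lemma dist_iso (hG : G.Connected) (x y : V) : G.dist (α x) (α y) = G.dist x y := by
  have key : ∀ (β : G ≃g G) x y, G.dist (β x) (β y) ≤ G.dist x y := fun β x y => by
    obtain ⟨p, hp⟩ := hG.exists_walk_length_eq_dist x y
    simpa [hp] using dist_le (p.map β.toHom)
  exact (key α x y).antisymm (by simpa using key α.symm (α x) (α y))

lemma mem_cob_preimage_iso {x y : V} : s(x, y) ∈ cob G (α ⁻¹' c) ↔ s(α x, α y) ∈ cob G c := by
  simp only [mem_cob_iff, Set.mem_preimage, α.map_adj_iff]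

lemma cob_preimage_iso : cob G (α ⁻¹' c) = Sym2.map α ⁻¹' cob G c := by
  ext e
  induction e using Sym2.ind with
  | _ x y => simp only [Set.mem_preimage, Sym2.map_mk, mem_cob_preimage_iso]

lemma mem_cobVerts_preimage_iso {v : V} : v ∈ cobVerts G (α ⁻¹' c) ↔ α v ∈ cobVerts G c := by
  refine ⟨fun ⟨w, hw⟩ => ⟨α w, (mem_cob_preimage_iso α).1 hw⟩, fun ⟨w, hw⟩ => ⟨α.symm w, ?_⟩⟩
  simpa [mem_cob_preimage_iso] using hw

lemma Tight.preimage_iso (h : Tight G c) : Tight G (α ⁻¹' c) := by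
  have key : ∀ s : Set V, (G.induce s).Connected → (G.induce (α ⁻¹' s)).Connected :=
    fun s hs => hs.map
      (induceHom α.symm.toHom fun v (hv : v ∈ s) => show α (α.symm v) ∈ s by simpa using hv)
      fun ⟨v, hv⟩ => ⟨⟨α v, hv⟩, Subtype.ext (α.symm_apply_apply v)⟩
  exact ⟨key c h.1, by simpa only [Set.preimage_compl] using key cᶜ h.2⟩

end Iso

theorem QuasiTransitive.tightCutsBounded (hG : G.Connected) (hlf : LocFin G)
    (hqt : QuasiTransitive G) (n : ℕ) : ∃ M, TightCutsBounded G n M := by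
  obtain ⟨F, hF, horb⟩ := hqt
  set 𝒞 : V → V → Set (Set V) := fun w w' =>
    {c | Tight G c ∧ (cob G c).Finite ∧ (cob G c).ncard < n ∧ w ∈ c ∧ w' ∉ c}
  have hfin : (⋃ w ∈ F, ⋃ w' ∈ G.neighborSet w, ⋃ c ∈ 𝒞 w w', G.dist w '' cobVerts G c).Finite :=
    hF.biUnion fun w _ => (hlf w).biUnion fun w' _ => (finite_setOf_tight w w' n).biUnion
      fun c hc => (ncard_cobVerts_le hc.2.1).1.image _
  obtain ⟨M, hM⟩ := hfin.bddAbove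
  have horiented : ∀ c, Tight G c → (cob G c).Finite → (cob G c).ncard < n →
      ∀ p ∈ c, ∀ p' ∉ c, G.Adj p p' → ∀ q ∈ cobVerts G c, G.dist p q ≤ M := by
    intro c htight hfin hn p hp p' hp' hpp' q hq
    obtain ⟨α, w, hw, rfl⟩ := horb p
    have hcard : (cob G (α ⁻¹' c)).ncard = (cob G c).ncard := by
      rw [cob_preimage_iso]
      exact Set.ncard_preimage_of_injective_subset_range (Sym2.map.injective α.injective)
        fun e _ => ⟨Sym2.map α.symm e, by simp [Sym2.map_map]⟩
    have hc' : α ⁻¹' c ∈ 𝒞 w (α.symm p') := ⟨htight.preimage_iso α,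
      cob_preimage_iso α ▸ hfin.preimage (Sym2.map.injective α.injective).injOn,
      hcard ▸ hn, hp, by simpa using hp'⟩
    have hadj : α.symm p' ∈ G.neighborSet w := α.map_adj_iff.1 (by simpa using hpp')
    have hq' : α.symm q ∈ cobVerts G (α ⁻¹' c) := by simpa [mem_cobVerts_preimage_iso] using hq
    rw [← α.apply_symm_apply q, dist_iso α hG]
    exact hM (Set.mem_biUnion hw (Set.mem_biUnion hadj (Set.mem_biUnion hc' ⟨_, hq', rfl⟩)))
  refine ⟨M, fun c hfin htight hn p ⟨p', hpp'⟩ q hq => ?_⟩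
  rcases mem_cob_iff.1 hpp' with ⟨hadj, ⟨hp, hp'⟩ | ⟨hp', hp⟩⟩
  · exact horiented c htight hfin hn p hp p' hp' hadj q hq
  · exact horiented cᶜ htight.compl (cob_compl (b := c) ▸ hfin) (cob_compl (b := c) ▸ hn) p hp
      p' (not_not.2 hp') hadj q (cobVerts_compl (b := c) ▸ hq)

end QuasiTransitive

theorem NatQI.tightCutsBounded {X : SimpleGraph V} {Γ : SimpleGraph W} {L : ℕ} {ψ : V → W}
    {φ : W → V} (hX : X.Connected) (hΓ : Γ.Connected) {d : ℕ} (hd : DegLe X d)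
    (h : NatQI X Γ L ψ φ) (hXb : ∀ N, ∃ M, TightCutsBounded X N M) (n : ℕ) :
    ∃ m, TightCutsBounded Γ n m := by
  obtain ⟨R, hR⟩ := h.exists_walk_near hX hΓ
  obtain ⟨N, hN⟩ := h.ncard_cob_preimage_nbhd_lt hX hΓ hd R n
  obtain ⟨M, hM⟩ := hXb N
  set τ := L * (3 * R + 1 + L) + L
  refine ⟨1 + (L * (τ + n * 2 * (M + 1 + 2 * τ) + τ) + 3 * L) + 1, ?_⟩
  intro b hb htight hn u hu v hv
  have hside : ∀ {z z₁ z₂ : W}, Γ.Adj z₁ z₂ → (z = z₁ ∨ z = z₂) → Γ.dist z z₁ ≤ 1 := by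
    rintro z z₁ z₂ hadj (rfl | rfl)
    exacts [by simp, (dist_eq_one_iff_adj.2 hadj.symm).le]
  obtain ⟨u₁, hu₁, u₂, hu₂, hu₁₂, hu⟩ := exists_adj_of_mem_cobVerts hu
  obtain ⟨v₁, hv₁, v₂, hv₂, hv₁₂, hv⟩ := exists_adj_of_mem_cobVerts hv
  have hφ := h.dist_inv_le_of_tight hX hΓ hR hM htight hb (hN b hb hn).1 (hN b hb hn).2
    hu₁ hu₂ hv₁ hv₂ hu₁₂ hv₁₂
  have hcard : (cobVerts Γ b).ncard ≤ n * 2 := (ncard_cobVerts_le hb).2.trans (by omega)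
  have h₁ := hside hu₁₂ hu
  have h₂ := h.dist_le_dist_inv hΓ u₁ v₁
  have h₃ := SimpleGraph.dist_comm (G := Γ) ▸ hside hv₁₂ hv
  have h₄ : L * X.dist (φ u₁) (φ v₁) ≤ L * (τ + n * 2 * (M + 1 + 2 * τ) + τ) :=
    Nat.mul_le_mul_left _ (hφ.trans (by gcongr))
  have h₅ := hΓ.dist_triangle (u := u) (v := u₁) (w := v)
  have h₆ := hΓ.dist_triangle (u := u₁) (v := v₁) (w := v)
  omega

end Paper

open Paper in
theorem stmt9_general {V W : Type*} (X : SimpleGraph V) (Γ : SimpleGraph W)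
    (hcX : X.Connected) (hcΓ : Γ.Connected)
    (hbX : BddVal X)
    (hqt : QuasiTransitive X)
    (hqi : ∃ (l e : ℝ) (ψ : V → W), 1 ≤ l ∧ 0 ≤ e ∧ IsQI X Γ l e ψ) :
    ∀ n : ℕ, 0 < n → ∃ m : ℕ, 0 < m ∧
      ∀ b : Set W, MemBX Γ b → Tight Γ b → (cob Γ b).ncard < n →
        ∀ v ∈ cobVerts Γ b, ∀ w ∈ cobVerts Γ b, Γ.dist v w < m := by
  intro n _
  obtain ⟨d, hd⟩ := hbX
  obtain ⟨l, e, ψ, hl, he, hψ⟩ := hqi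
  obtain ⟨L, φ, h⟩ := hψ.exists_natQI hl he
  obtain ⟨m, hm⟩ := h.tightCutsBounded hcX hcΓ hd
    (hqt.tightCutsBounded hcX fun v => (hd v).1) n
  exact ⟨m + 1, m.succ_pos, fun b hb ht hn v hv w hw => Nat.lt_succ_of_le (hm b hb ht hn v hv w hw)⟩

open Paper in
theorem stmt9 {V W : Type*} (X : SimpleGraph V) (Γ : SimpleGraph W)
    (hcX : X.Connected) (hcΓ : Γ.Connected)
    (hbX : BddVal X) (hbΓ : BddVal Γ)
    (hqt : QuasiTransitive X)
    (hqi : ∃ (l e : ℝ) (ψ : V → W), 1 ≤ l ∧ 0 ≤ e ∧ IsQI X Γ l e ψ) :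
    ∀ n : ℕ, 0 < n → ∃ m : ℕ, 0 < m ∧
      ∀ b : Set W, MemBX Γ b → Tight Γ b → (cob Γ b).ncard < n →
        ∀ v ∈ cobVerts Γ b, ∀ w ∈ cobVerts Γ b, Γ.dist v w < m :=
  stmt9_general X Γ hcX hcΓ hbX hqt hqi
end

section
/- Let Γ₁ and Γ₂ be connected, locally finite graphs and ψ: V(Γ₁) → V(Γ₂) a (λ,λ)-quasi-isometry. Then there exists a constant r, depending only on λ, such that for every b ∈ 𝓑Γ₁ there exists b' ∈ 𝓑Γ₂ with: (i) the Hausdorff distance in Γ₂ between ψ(b) and b' is at most r; (ii) every endpoint of every edge of δb' lies within distance r of ψ(D), where D is the set of endpoints of the edges of δb; and (iii) if the induced subgraph Γ₁[b] is connected, then Γ₂[b'] is connected. -/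
open SimpleGraph

namespace StmtAux

variable {V : Type*} {G : SimpleGraph V}

lemma dist_le_of_mem_support {u v z : V} (p : G.Walk u v)
    (hz : z ∈ p.support) : G.dist z v ≤ p.length := by
  classical
  calc G.dist z v ≤ (p.dropUntil z hz).length := SimpleGraph.dist_le _
    _ ≤ p.length := SimpleGraph.Walk.length_dropUntil_le p hz

lemma ball_finite (hc : G.Connected) (hlf : ∀ v : V, (G.neighborSet v).Finite) (v : V) :
    ∀ n : ℕ, {w : V | G.dist v w ≤ n}.Finite := by
  intro n
  induction n with
  | zero =>
    apply Set.Finite.subset (Set.finite_singleton v)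
    intro w hw
    simp only [Set.mem_setOf_eq, Nat.le_zero] at hw
    have : w = v := ((hc v w).dist_eq_zero_iff).mp hw |>.symm
    simp [this]
  | succ n ih =>
    apply Set.Finite.subset (ih.union (Set.Finite.biUnion ih (fun u _ => (hlf u))))
    intro w hw
    simp only [Set.mem_setOf_eq] at hw
    rcases Nat.lt_or_ge (G.dist v w) (n+1) with h | h
    · exact Or.inl (Nat.lt_succ_iff.mp h)
    · have hd : G.dist w v = n + 1 := by
        rw [SimpleGraph.dist_comm]; exact le_antisymm hw h
      obtain ⟨p, hp⟩ := hc.exists_walk_length_eq_dist w v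
      rw [hd] at hp
      cases p with
      | nil => simp at hp
      | cons h' q =>
        rename_i u
        have hq : q.length = n := by simpa using hp
        right
        refine Set.mem_biUnion (show G.dist v u ≤ n from ?_) h'.symm
        calc G.dist v u = G.dist u v := SimpleGraph.dist_comm ..
          _ ≤ q.length := SimpleGraph.dist_le q
          _ = n := hq

lemma reach_in_induce {S : Set V} :
    ∀ {u v : V} (p : G.Walk u v) (hp : ∀ z ∈ p.support, z ∈ S),
      (G.induce S).Reachable ⟨u, hp u p.start_mem_support⟩ ⟨v, hp v p.end_mem_support⟩ := by
  intro u v p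
  induction p with
  | nil => intro hp; rfl
  | @cons a c e h q ih =>
    intro hp
    have ha : a ∈ S := hp a (by simp)
    have hc : c ∈ S := hp c (by simp)
    have hadj : (G.induce S).Adj ⟨a, ha⟩ ⟨c, hc⟩ := by
      simp only [SimpleGraph.comap_adj]
      exact h
    exact (hadj.reachable).trans (ih (fun z hz => hp z (by simp [hz])))

lemma crossing (hc : G.Connected) {b : Set V} :
    ∀ {u x : V} (p : G.Walk u x), u ∈ b → x ∉ b →
      ∃ d, (∃ w, s(d, w) ∈  {e | ∃ x y : V, e = s(x, y) ∧ G.Adj x y ∧ x ∈ b ∧ y ∉ b}) ∧ G.dist u d ≤ p.length := by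
  intro u x p
  induction p with
  | nil => intro hu hx; exact absurd hu hx
  | @cons a c e h q ih =>
    intro hu hx
    by_cases hcb : c ∈ b
    · obtain ⟨d, hd, hdist⟩ := ih hcb hx
      refine ⟨d, hd, ?_⟩
      have h1 : G.dist a c ≤ 1 := by
        simpa using SimpleGraph.dist_le (SimpleGraph.Walk.cons h SimpleGraph.Walk.nil)
      calc G.dist a d ≤ G.dist a c + G.dist c d := hc.dist_triangle
        _ ≤ 1 + q.length := Nat.add_le_add h1 hdist
        _ = (SimpleGraph.Walk.cons h q).length := by simp [Nat.add_comm]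
    · refine ⟨a, ⟨c, ⟨a, c, rfl, h, hu, hcb⟩⟩, ?_⟩
      simp [SimpleGraph.dist_self]

end StmtAux


open Paper in
theorem stmt10 (l : ℝ) (hl : 1 ≤ l) :
    ∃ r : ℝ, 0 ≤ r ∧
      ∀ (V₁ V₂ : Type) (G₁ : SimpleGraph V₁) (G₂ : SimpleGraph V₂),
        G₁.Connected → G₂.Connected → LocFin G₁ → LocFin G₂ →
        ∀ ψ : V₁ → V₂, IsQI G₁ G₂ l l ψ →
          ∀ b : Set V₁, MemBX G₁ b →
            ∃ b' : Set V₂, MemBX G₂ b' ∧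
              HausBdd G₂ (ψ '' b) b' r ∧
              (∀ v ∈ cobVerts G₂ b', ∃ d ∈ cobVerts G₁ b, (G₂.dist v (ψ d) : ℝ) ≤ r) ∧
              ((G₁.induce b).Connected → (G₂.induce b').Connected) := by
  classical
  have hl0 : (0:ℝ) < l := lt_of_lt_of_le one_pos hl
  set K : ℕ := ⌈2*l⌉₊ + 1 with hKdef
  have hK2l : 2*l ≤ (K:ℝ) := by
    have h := Nat.le_ceil (2*l)
    have : ((⌈2*l⌉₊ : ℕ) : ℝ) ≤ (K:ℝ) := by rw [hKdef]; push_cast; linarith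
    linarith
  have hKl1 : l + 1 ≤ (K:ℝ) := by
    have h := Nat.le_ceil (2*l)
    have : ((⌈2*l⌉₊ : ℕ) : ℝ) + 1 = (K:ℝ) := by rw [hKdef]; push_cast; ring
    linarith
  set ρ : ℝ := (K:ℝ) + l*(l*((K:ℝ)+2*l)) + l with hρdef
  have hK0 : (0:ℝ) ≤ (K:ℝ) := Nat.cast_nonneg K
  have hKρ : (K:ℝ) ≤ ρ := by
    have h1 : (0:ℝ) ≤ (K:ℝ) + 2*l := by linarith
    have h2 : (0:ℝ) ≤ l*(l*((K:ℝ)+2*l)) := mul_nonneg hl0.le (mul_nonneg hl0.le h1)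
    rw [hρdef]; linarith
  refine ⟨ρ + 1, by linarith, ?_⟩
  intro V₁ V₂ G₁ G₂ hc₁ hc₂ hlf₁ hlf₂ ψ hqi b hb
  obtain ⟨hqie, hcs⟩ := hqi
  set b' : Set V₂ := {w : V₂ | ∃ v ∈ b, (G₂.dist w (ψ v) : ℝ) ≤ (K:ℝ)} with hb'def
  have hψb' : ∀ v ∈ b, ψ v ∈ b' := fun v hv =>
    ⟨v, hv, by rw [SimpleGraph.dist_self]; exact_mod_cast hK0⟩
  -- key lemma: endpoints of coboundary edges of b' (on the b' side) are near ψ(D)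
  have key : ∀ x y : V₂, G₂.Adj x y → x ∈ b' → y ∉ b' →
      ∃ d ∈ cobVerts G₁ b, (G₂.dist x (ψ d) : ℝ) ≤ ρ := by
    intro x y hxy hx hy
    obtain ⟨v, hv, hxv⟩ := hx
    obtain ⟨u, hu⟩ := hcs x
    have hyx : (G₂.dist y x : ℝ) ≤ 1 := by
      have : G₂.dist y x ≤ 1 := by
        simpa using SimpleGraph.dist_le (SimpleGraph.Walk.cons hxy.symm SimpleGraph.Walk.nil)
      exact_mod_cast this
    have hub : u ∉ b := by
      intro hub
      apply hy
      refine ⟨u, hub, ?_⟩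
      have tri : G₂.dist y (ψ u) ≤ G₂.dist y x + G₂.dist x (ψ u) := hc₂.dist_triangle
      have tri' : (G₂.dist y (ψ u):ℝ) ≤ (G₂.dist y x:ℝ) + (G₂.dist x (ψ u):ℝ) := by
        exact_mod_cast tri
      linarith
    have h1 : (G₂.dist (ψ v) (ψ u) : ℝ) ≤ (K:ℝ) + l := by
      have tri : G₂.dist (ψ v) (ψ u) ≤ G₂.dist (ψ v) x + G₂.dist x (ψ u) := hc₂.dist_triangle
      have tri' : (G₂.dist (ψ v) (ψ u):ℝ) ≤ (G₂.dist (ψ v) x:ℝ) + (G₂.dist x (ψ u):ℝ) := by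
        exact_mod_cast tri
      have hcm : G₂.dist (ψ v) x = G₂.dist x (ψ v) := SimpleGraph.dist_comm ..
      rw [hcm] at tri'
      linarith
    have h2 : (G₁.dist v u : ℝ) ≤ l * ((K:ℝ) + 2*l) := by
      have hq := (hqie v u).1
      have : (G₁.dist v u : ℝ)/l - l ≤ (K:ℝ) + l := le_trans hq h1
      have h' : (G₁.dist v u : ℝ) ≤ ((K:ℝ) + 2*l) * l := by
        rw [← sub_le_iff_le_add] at this
        calc (G₁.dist v u : ℝ) = (G₁.dist v u : ℝ)/l * l := by field_simp
          _ ≤ ((K:ℝ) + 2*l) * l := by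
              apply mul_le_mul_of_nonneg_right _ (le_of_lt hl0)
              linarith
      linarith [h'.trans_eq (mul_comm _ _)]
    obtain ⟨p, hp⟩ := hc₁.exists_walk_length_eq_dist v u
    obtain ⟨d, hd, hdist⟩ := StmtAux.crossing hc₁ p hv hub
    rw [hp] at hdist
    have hd1 : (G₁.dist v d : ℝ) ≤ l * ((K:ℝ) + 2*l) :=
      le_trans (by exact_mod_cast hdist) h2
    have h3 : (G₂.dist (ψ v) (ψ d) : ℝ) ≤ l*(l*((K:ℝ)+2*l)) + l := by
      have hq := (hqie v d).2
      nlinarith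
    have h4 : (G₂.dist x (ψ d) : ℝ) ≤ ρ := by
      have tri : G₂.dist x (ψ d) ≤ G₂.dist x (ψ v) + G₂.dist (ψ v) (ψ d) := hc₂.dist_triangle
      have tri' : (G₂.dist x (ψ d):ℝ) ≤ (G₂.dist x (ψ v):ℝ) + (G₂.dist (ψ v) (ψ d):ℝ) := by
        exact_mod_cast tri
      rw [hρdef]; linarith
    exact ⟨d, hd, h4⟩
  -- D := cobVerts G₁ b is finite
  have hDfin : (cobVerts G₁ b).Finite := by
    have hsub : cobVerts G₁ b ⊆ ⋃ e ∈ cob G₁ b, {x : V₁ | x ∈ e} := by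
      rintro v ⟨w, hw⟩
      exact Set.mem_biUnion hw (by simp)
    refine Set.Finite.subset (Set.Finite.biUnion hb (fun e he => ?_)) hsub
    obtain ⟨a, c, rfl, -, -, -⟩ := he
    refine Set.Finite.subset ((Set.finite_singleton c).insert a) (fun x hx => ?_)
    rcases Sym2.mem_iff.mp hx with h | h <;> simp [h]
  -- the set of vertices within ρ of ψ(D) is finite
  have hSfin : {w : V₂ | ∃ d ∈ cobVerts G₁ b, (G₂.dist w (ψ d):ℝ) ≤ ρ}.Finite := by
    refine Set.Finite.subset
      (Set.Finite.biUnion hDfin (fun d _ => StmtAux.ball_finite hc₂ hlf₂ (ψ d) ⌈ρ⌉₊)) ?_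
    rintro w ⟨d, hd, hw⟩
    refine Set.mem_biUnion hd ?_
    show G₂.dist (ψ d) w ≤ ⌈ρ⌉₊
    rw [SimpleGraph.dist_comm]
    have : (G₂.dist w (ψ d):ℝ) ≤ ((⌈ρ⌉₊:ℕ):ℝ) := le_trans hw (Nat.le_ceil ρ)
    exact_mod_cast this
  have hMem : MemBX G₂ b' := by
    refine Set.Finite.subset
      (Set.Finite.biUnion hSfin (fun x _ => Set.Finite.image (fun y => s(x,y)) (hlf₂ x))) ?_
    rintro e ⟨x, y, rfl, hadj, hx, hy⟩
    obtain ⟨d, hd, hdist⟩ := key x y hadj hx hy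
    exact Set.mem_biUnion (⟨d, hd, hdist⟩ :
      x ∈ {w : V₂ | ∃ d ∈ cobVerts G₁ b, (G₂.dist w (ψ d):ℝ) ≤ ρ}) ⟨y, hadj, rfl⟩
  refine ⟨b', hMem, ⟨?_, ?_⟩, ?_, ?_⟩
  · -- Hausdorff forward
    rintro a ⟨v, hv, rfl⟩
    refine ⟨ψ v, hψb' v hv, ?_⟩
    rw [SimpleGraph.dist_self]
    push_cast
    linarith
  · -- Hausdorff backward
    rintro w ⟨v, hv, hwv⟩
    refine ⟨ψ v, ⟨v, hv, rfl⟩, ?_⟩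
    have : G₂.dist (ψ v) w = G₂.dist w (ψ v) := SimpleGraph.dist_comm ..
    rw [this]
    linarith
  · -- coboundary vertices of b' are near ψ(D)
    rintro w ⟨w', hww'⟩
    obtain ⟨x, y, heq, hadj, hx, hy⟩ := hww'
    obtain ⟨d, hd, hdist⟩ := key x y hadj hx hy
    rcases Sym2.eq_iff.mp heq with ⟨rfl, rfl⟩ | ⟨rfl, rfl⟩
    · exact ⟨d, hd, by linarith⟩
    · refine ⟨d, hd, ?_⟩
      have tri : G₂.dist w (ψ d) ≤ G₂.dist w w' + G₂.dist w' (ψ d) := hc₂.dist_triangle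
      have tri' : (G₂.dist w (ψ d):ℝ) ≤ (G₂.dist w w':ℝ) + (G₂.dist w' (ψ d):ℝ) := by
        exact_mod_cast tri
      have hwx : (G₂.dist w w' : ℝ) ≤ 1 := by
        have : G₂.dist w w' ≤ 1 := by
          simpa using SimpleGraph.dist_le (SimpleGraph.Walk.cons hadj.symm SimpleGraph.Walk.nil)
        exact_mod_cast this
      linarith
  · -- connectivity
    intro hbconn
    have reachA : ∀ (w : V₂) (v : V₁) (hv : v ∈ b), (G₂.dist w (ψ v):ℝ) ≤ (K:ℝ) →
        ∀ hw : w ∈ b', (G₂.induce b').Reachable ⟨w, hw⟩ ⟨ψ v, hψb' v hv⟩ := by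
      intro w v hv hd hw
      obtain ⟨p, hp⟩ := hc₂.exists_walk_length_eq_dist w (ψ v)
      have hsupp : ∀ z ∈ p.support, z ∈ b' := by
        intro z hz
        refine ⟨v, hv, ?_⟩
        have h1 := StmtAux.dist_le_of_mem_support p hz
        rw [hp] at h1
        exact le_trans (by exact_mod_cast h1) hd
      exact StmtAux.reach_in_induce p hsupp
    have psiR : ∀ (a c : ↥b) (q : (G₁.induce b).Walk a c),
        (G₂.induce b').Reachable ⟨ψ a, hψb' a a.2⟩ ⟨ψ c, hψb' c c.2⟩ := by
      intro a c q
      induction q with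
      | nil => exact SimpleGraph.Reachable.refl _
      | @cons a c e h q ih =>
        have hadj : G₁.Adj (a : V₁) (c : V₁) := h
        have hd : (G₂.dist (ψ (c:V₁)) (ψ (a:V₁)) : ℝ) ≤ (K:ℝ) := by
          have h2 := (hqie (a:V₁) (c:V₁)).2
          have h1 : G₁.dist (a:V₁) (c:V₁) ≤ 1 := by
            simpa using SimpleGraph.dist_le (SimpleGraph.Walk.cons hadj SimpleGraph.Walk.nil)
          have h1' : (G₁.dist (a:V₁) (c:V₁) : ℝ) ≤ 1 := by exact_mod_cast h1
          have hcm : G₂.dist (ψ (c:V₁)) (ψ (a:V₁)) = G₂.dist (ψ (a:V₁)) (ψ (c:V₁)) :=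
            SimpleGraph.dist_comm ..
          rw [hcm]
          nlinarith
        exact ((reachA (ψ (c:V₁)) (a:V₁) a.2 hd (hψb' (c:V₁) c.2)).symm).trans ih
    have hne : Nonempty ↥b' := by
      obtain ⟨⟨v₀, hv₀⟩⟩ := hbconn.nonempty
      exact ⟨⟨ψ v₀, hψb' v₀ hv₀⟩⟩
    rw [SimpleGraph.connected_iff]
    refine ⟨?_, hne⟩
    rintro ⟨w₁, hw₁⟩ ⟨w₂, hw₂⟩
    have hw₁' := hw₁
    have hw₂' := hw₂
    obtain ⟨v₁, hv₁, hd₁⟩ := hw₁'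
    obtain ⟨v₂, hv₂, hd₂⟩ := hw₂'
    obtain ⟨q⟩ := hbconn.preconnected ⟨v₁, hv₁⟩ ⟨v₂, hv₂⟩
    exact (reachA w₁ v₁ hv₁ hd₁ hw₁).trans
      ((psiR ⟨v₁, hv₁⟩ ⟨v₂, hv₂⟩ q).trans (reachA w₂ v₂ hv₂ hd₂ hw₂).symm)
end
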